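/- arXiv:1906.06912 — 6 statements merged into one kernel-verified Lean document; each statement's English description precedes it below -/
import Mathlib

section
/- Let u, μ, k, s be elements of ZMod p with s ≠ 0, let δ be a natural number, r : G₂ → BitVec δ any representation function, and m : BitVec δ a message shard. Set ε = g^(u·s), k₀ = (g^μ)^(s⁻¹), k₂ = g^(μ·k·s⁻¹), and c = m XOR r(e(ε, k₀^k)). Then c XOR r(e(ε, k₂)) = m, i.e. a service provider holding the unlocked key k₂ correctly recovers the plaintext shard. -/
/-- Correct decryption: encrypting the shard `m` as `c = m ^^^ r(e(ε, k₀^k))`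
and decrypting by XORing with `r(e(ε, k₂))` (where `k₂ = g^(μ·k·s⁻¹)` is the
unlocked key) recovers `m`. -/
theorem decryption_correct (p : ℕ) [Fact p.Prime]
    {G₁ G₂ : Type*} [CommGroup G₁] [CommGroup G₂]
    (g : G₁) (hg : g ^ p = 1)
    (e : G₁ → G₁ → G₂)
    (he : ∀ x y : ℤ, e (g ^ x) (g ^ y) = e g g ^ (x * y))
    (u μ k s : ZMod p) (hs : s ≠ 0)
    (δ : ℕ) (r : G₂ → BitVec δ) (m : BitVec δ)
    (ε : G₁) (hε : ε = g ^ (u * s).val)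
    (k₀ : G₁) (hk₀ : k₀ = (g ^ μ.val) ^ (s⁻¹).val)
    (k₂ : G₁) (hk₂ : k₂ = g ^ (μ * k * s⁻¹).val)
    (c : BitVec δ) (hc : c = m ^^^ r (e ε (k₀ ^ k.val))) :
    c ^^^ r (e ε k₂) = m := by
  -- the pairing value has order dividing p
  have hegg : (e g g) ^ (p : ℤ) = 1 := by
    have h1 := he (p : ℤ) 1
    have h0 := he 0 1
    simp only [zpow_natCast, hg, zpow_one, zpow_zero, mul_one, zero_mul, zpow_zero] at h1 h0
    rw [zpow_natCast, ← h1, h0]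
  -- exponents equal mod p give equal powers
  have key : ∀ x y : ℤ, (x : ZMod p) = (y : ZMod p) → e g g ^ x = e g g ^ y := by
    intro x y hxy
    have hdvd : (p : ℤ) ∣ x - y := by
      rwa [← ZMod.intCast_zmod_eq_zero_iff_dvd, Int.cast_sub, sub_eq_zero]
    obtain ⟨t, ht⟩ := hdvd
    have : x = y + p * t := by linarith
    rw [this, zpow_add, zpow_mul, hegg, one_zpow, mul_one]
  -- rewrite pairings as integer powers
  have hmain : e ε (k₀ ^ k.val) = e ε k₂ := by
    have h1 : e ε (k₀ ^ k.val) =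
        e g g ^ (((u * s).val : ℤ) * ((μ.val : ℤ) * (s⁻¹).val * k.val)) := by
      rw [hε, hk₀, ← pow_mul, ← pow_mul]
      simp only [← zpow_natCast g]
      rw [he]
      congr 1
      push_cast
      ring
    have h2 : e ε k₂ = e g g ^ (((u * s).val : ℤ) * ((μ * k * s⁻¹).val : ℤ)) := by
      rw [hε, hk₂, ← zpow_natCast g, ← zpow_natCast g ((μ * k * s⁻¹).val), he]
    rw [h1, h2]
    apply key
    push_cast [ZMod.natCast_val, ZMod.intCast_cast, ZMod.intCast_zmod_cast]
    simp only [ZMod.natCast_val, ZMod.cast_id]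
    ring
  rw [hc, hmain, BitVec.xor_assoc]
  simp
end

section
/- Let u, μ, v, k be elements of ZMod p with μ ≠ 0 and v ≠ 0, and let s and s' be nonzero elements of ZMod p (the time-keys at encryption time and at access time). Define the encryption-time shard ε = g^(u·s) and token k₀ = (g^μ)^(s⁻¹); the encapsulated key k₁ = k₀^(v·k·μ⁻¹); the updated shard ε' = ε^(s'·s⁻¹) and updated encapsulated key k₁' = k₁^(s·s'⁻¹); and the unlocked key k₂ = (k₁')^(μ·v⁻¹). Then e(ε', k₂) = e(ε, k₀^k) = e(g,g)^(u·k·μ): the decryption mask computed at the later time equals the mask used at encryption, so decryption succeeds across updates whenever a fresh unlocked key is issued. -/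
/-- Decryption succeeds across updates: the mask computed from the updated
shard `ε' = ε^(s'·s⁻¹)` and the freshly unlocked key
`k₂ = (k₁^(s·s'⁻¹))^(μ·v⁻¹)` equals the mask used at encryption time,
namely `e(ε, k₀^k) = e(g,g)^(u·k·μ)`. -/
theorem decryption_across_updates (p : ℕ) [Fact p.Prime]
    {G₁ G₂ : Type*} [CommGroup G₁] [CommGroup G₂]
    (g : G₁) (hg : g ^ p = 1)
    (e : G₁ → G₁ → G₂)
    (he : ∀ x y : ℤ, e (g ^ x) (g ^ y) = e g g ^ (x * y))
    (u μ v k : ZMod p) (hμ : μ ≠ 0) (hv : v ≠ 0)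
    (s s' : ZMod p) (hs : s ≠ 0) (hs' : s' ≠ 0)
    (ε : G₁) (hε : ε = g ^ (u * s).val)
    (k₀ : G₁) (hk₀ : k₀ = (g ^ μ.val) ^ (s⁻¹).val)
    (k₁ : G₁) (hk₁ : k₁ = k₀ ^ (v * k * μ⁻¹).val)
    (ε' : G₁) (hε' : ε' = ε ^ (s' * s⁻¹).val)
    (k₁' : G₁) (hk₁' : k₁' = k₁ ^ (s * s'⁻¹).val)
    (k₂ : G₁) (hk₂ : k₂ = k₁' ^ (μ * v⁻¹).val) :
    e ε' k₂ = e ε (k₀ ^ k.val) ∧ e ε (k₀ ^ k.val) = e g g ^ (u * k * μ).val := by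
  -- powers of g only depend on the exponent mod p
  have Lg : ∀ m : ℕ, g ^ m = g ^ (m % p) := by
    intro m
    conv_lhs => rw [← Nat.div_add_mod m p]
    rw [pow_add, pow_mul, hg, one_pow, one_mul]
  have L2 : ∀ a b : ZMod p, (g ^ a.val) ^ b.val = g ^ ((a * b).val) := by
    intro a b
    rw [← pow_mul, Lg, ZMod.val_mul]
  -- the pairing on natural exponents
  have henat : ∀ x y : ℕ, e (g ^ x) (g ^ y) = e g g ^ (x * y) := by
    intro x y
    have := he (x : ℤ) (y : ℤ)
    rw [zpow_natCast, zpow_natCast] at this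
    rw [this, ← Int.natCast_mul, zpow_natCast]
  -- e g g has order dividing p
  have hE : e g g ^ p = 1 := by
    have h1 := henat 1 p
    rw [hg, pow_one, one_mul] at h1
    have h0 := henat 1 0
    rw [pow_zero, pow_one, mul_zero, pow_zero] at h0
    rw [← h1, h0]
  have LE : ∀ m : ℕ, e g g ^ m = e g g ^ (m % p) := by
    intro m
    conv_lhs => rw [← Nat.div_add_mod m p]
    rw [pow_add, pow_mul, hE, one_pow, one_mul]
  have LE2 : ∀ a b : ZMod p, e (g ^ a.val) (g ^ b.val) = e g g ^ ((a * b).val) := by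
    intro a b
    rw [henat, LE, ← ZMod.val_mul]
  have e1 : ε' = g ^ ((u * s * (s' * s⁻¹)).val) := by
    rw [hε', hε, L2]
  have e2 : k₂ = g ^ ((μ * s⁻¹ * (v * k * μ⁻¹) * (s * s'⁻¹) * (μ * v⁻¹)).val) := by
    rw [hk₂, hk₁', hk₁, hk₀, L2, L2, L2, L2]
  have e3 : k₀ ^ k.val = g ^ ((μ * s⁻¹ * k).val) := by
    rw [hk₀, L2, L2]
  have z1 : u * s * (s' * s⁻¹) = u * s' := by
    field_simp
  have z2 : μ * s⁻¹ * (v * k * μ⁻¹) * (s * s'⁻¹) * (μ * v⁻¹) = k * μ * s'⁻¹ := by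
    field_simp
  have z3 : u * s' * (k * μ * s'⁻¹) = u * k * μ := by
    field_simp
  have z4 : u * s * (μ * s⁻¹ * k) = u * k * μ := by
    field_simp
  constructor
  · rw [e1, e2, hε, e3, z1, z2, LE2, LE2, z3, z4]
  · rw [hε, e3, LE2, z4]
end

section
/- Assume the element e(g,g) of G₂ has order exactly p. Let u, μ, k, s, s' be elements of ZMod p with s ≠ 0, s' ≠ 0, s ≠ s', and u·k·μ ≠ 0. Then e(g^(u·s'), g^(μ·k·s⁻¹)) ≠ e(g,g)^(u·k·μ): an unlocked key issued for the old time-key s, combined with the masking shards updated to the new time-key s', no longer yields the correct decryption mask, so the key is effectively revoked by the update. -/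
/-- Revocation: once the shards are updated to a new time-key `s' ≠ s`, an
unlocked key issued for the old time-key `s` no longer yields the correct
decryption mask, assuming `e(g,g)` has order exactly `p` and
`u·k·μ ≠ 0`. -/
theorem revocation (p : ℕ) [Fact p.Prime]
    {G₁ G₂ : Type*} [CommGroup G₁] [CommGroup G₂]
    (g : G₁) (hg : g ^ p = 1)
    (e : G₁ → G₁ → G₂)
    (he : ∀ x y : ℤ, e (g ^ x) (g ^ y) = e g g ^ (x * y))
    (hord : orderOf (e g g) = p)
    (u μ k s s' : ZMod p) (hs : s ≠ 0) (hs' : s' ≠ 0) (hss' : s ≠ s')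
    (hukμ : u * k * μ ≠ 0) :
    e (g ^ (u * s').val) (g ^ (μ * k * s⁻¹).val) ≠ e g g ^ (u * k * μ).val := by
  intro h
  have h1 : e (g ^ ((u * s').val : ℤ)) (g ^ ((μ * k * s⁻¹).val : ℤ))
      = e g g ^ (((u * s').val : ℤ) * ((μ * k * s⁻¹).val : ℤ)) := he _ _
  rw [zpow_natCast, zpow_natCast] at h1
  rw [h1] at h
  have h2 : (e g g) ^ (((u * s').val : ℤ) * ((μ * k * s⁻¹).val : ℤ))
      = (e g g) ^ (((u * k * μ).val : ℤ)) := by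
    rw [zpow_natCast]; exact h
  rw [zpow_eq_zpow_iff_modEq, hord] at h2
  have h3 : ((((u * s').val : ℤ) * ((μ * k * s⁻¹).val : ℤ) : ℤ) : ZMod p)
      = (((u * k * μ).val : ℤ) : ZMod p) := by
    exact_mod_cast (ZMod.intCast_eq_intCast_iff' _ _ _).mpr h2
  push_cast [ZMod.natCast_val, ZMod.cast_id] at h3
  -- h3 : (u * s') * (μ * k * s⁻¹) = u * k * μ
  have hne : u * k * μ * (s' * s⁻¹) = u * k * μ * 1 := by
    calc u * k * μ * (s' * s⁻¹) = u * s' * (μ * k * s⁻¹) := by ring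
    _ = u * k * μ * 1 := by rw [h3, mul_one]
  have := mul_left_cancel₀ hukμ hne
  have hs'' : s' = s := by
    field_simp at this
    exact this
  exact hss' hs''.symm
end

section
/- Let a, b, μ', ω, k', s' be elements of ZMod p with a ≠ 0, b ≠ 0 and s' ≠ 0, and implicitly set μ = μ'·b, v = ω·b·a⁻¹, k = k'·a, s = s'·b. Then g^(ω·k'·s'⁻¹) = g^(v·k·s⁻¹) and (g^a)^(k'·μ'·s'⁻¹) = g^(k·μ·s⁻¹): the simulator's Phase-1 encapsulated key and unlocked key computed without knowledge of a and b equal the genuine protocol values for the implicit time-key s. -/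
lemma pow_val_cast {p : ℕ} [Fact p.Prime] {G₁ : Type*} [CommGroup G₁]
    (g : G₁) (hg : g ^ p = 1) (n : ℕ) : g ^ n = g ^ ((n : ZMod p)).val := by
  conv_lhs => rw [← Nat.mod_add_div n p, pow_add, pow_mul, hg, one_pow, mul_one]
  rw [ZMod.val_natCast]

/-- Theorem 1 simulation, Phase 1 (unlocked-key queries): with the implicit
settings `μ = μ'·b`, `v = ω·b·a⁻¹`, `k = k'·a` and time-key `s = s'·b`, the
simulator's encapsulated key `g^(ω·k'·s'⁻¹)` and unlocked key
`A^(k'·μ'·s'⁻¹)` (with `A = g^a`) equal the genuine values `g^(v·k·s⁻¹)`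
and `g^(k·μ·s⁻¹)`. -/
theorem simulator_phase1 (p : ℕ) [Fact p.Prime] {G₁ : Type*} [CommGroup G₁]
    (g : G₁) (hg : g ^ p = 1)
    (a b μ' ω k' s' : ZMod p) (ha : a ≠ 0) (hb : b ≠ 0) (hs' : s' ≠ 0) :
    g ^ (ω * k' * s'⁻¹).val
        = g ^ ((ω * b * a⁻¹) * (k' * a) * (s' * b)⁻¹).val ∧
      (g ^ a.val) ^ (k' * μ' * s'⁻¹).val
        = g ^ ((k' * a) * (μ' * b) * (s' * b)⁻¹).val := by
  constructor
  · congr 1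
    congr 1
    field_simp
  · rw [← pow_mul, pow_val_cast g hg]
    congr 1
    congr 1
    push_cast [ZMod.natCast_val, ZMod.cast_id]
    field_simp
end

section
/- Let a, b, μ', ω, k', s be elements of ZMod p with a ≠ 0, μ' ≠ 0 and s ≠ 0, and implicitly set v = ω·b·a⁻¹ and k = k'·a. Let k₀ = (g^b)^(μ'·s⁻¹) be the encryption token computed by the adversarial file keeper from the user's public key q = g^(μ'·b). Then k₀^(ω·k'·μ'⁻¹) = g^(v·k·s⁻¹): the simulator's answer in the commit phase equals the genuine encapsulated key for the implicit exponents. -/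
private lemma pow_eq_of_cast_eq {p : ℕ} {G₁ : Type*} [CommGroup G₁] (g : G₁)
    (hg : g ^ p = 1) {m n : ℕ} (h : (m : ZMod p) = n) : g ^ m = g ^ n := by
  have hmod : m % p = n % p := by
    have := (ZMod.natCast_eq_natCast_iff m n p).mp h
    exact this
  have key : ∀ t : ℕ, g ^ t = g ^ (t % p) := by
    intro t
    conv_lhs => rw [← Nat.div_add_mod t p]
    rw [pow_add, pow_mul, hg, one_pow, one_mul]
  rw [key m, key n, hmod]

/-- Theorem 2 simulation, commit phase: given the encryption token
`k₀ = (g^b)^(μ'·s⁻¹)` computed by the adversarial file keeper from the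
public key `q = g^(μ'·b)`, the simulator's answer `k₀^(ω·k'·μ'⁻¹)` equals
the genuine encapsulated key `g^(v·k·s⁻¹)` for the implicit exponents
`v = ω·b·a⁻¹` and `k = k'·a`. -/
theorem curious_keeper_commit (p : ℕ) [Fact p.Prime] {G₁ : Type*} [CommGroup G₁]
    (g : G₁) (hg : g ^ p = 1)
    (a b μ' ω k' s : ZMod p) (ha : a ≠ 0) (hμ' : μ' ≠ 0) (hs : s ≠ 0)
    (k₀ : G₁) (hk₀ : k₀ = (g ^ b.val) ^ (μ' * s⁻¹).val) :
    k₀ ^ (ω * k' * μ'⁻¹).val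
      = g ^ ((ω * b * a⁻¹) * (k' * a) * s⁻¹).val := by
  subst hk₀
  rw [← pow_mul, ← pow_mul]
  apply pow_eq_of_cast_eq g hg
  push_cast [ZMod.natCast_val, ZMod.cast_id]
  field_simp
end

section
/- Let a, b, u, μ', k', s be elements of ZMod p with s ≠ 0, and let Z = g^(a·b·s⁻¹). Then e(g^(u·s), Z^(k'·μ')) = e(g,g)^(u·(k'·a)·(μ'·b)): when the IDDH challenger returns the non-random value Z = g^(ab/s), the simulator's challenge-phase mask equals the genuine encryption mask e(g,g)^(u·k·μ) for the implicit session key k = k'·a and user secret μ = μ'·b. -/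
/-- Theorem 3 simulation, challenge phase: when the IDDH challenger returns
the non-random value `Z = g^(a·b·s⁻¹)`, the simulator's mask
`e(g^(u·s), Z^(k'·μ'))` equals the genuine encryption mask
`e(g,g)^(u·k·μ)` for the implicit `k = k'·a` and `μ = μ'·b`. -/
theorem iddh_challenge_mask (p : ℕ) [Fact p.Prime]
    {G₁ G₂ : Type*} [CommGroup G₁] [CommGroup G₂]
    (g : G₁) (hg : g ^ p = 1)
    (e : G₁ → G₁ → G₂)
    (he : ∀ x y : ℤ, e (g ^ x) (g ^ y) = e g g ^ (x * y))
    (a b u μ' k' s : ZMod p) (hs : s ≠ 0)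
    (Z : G₁) (hZ : Z = g ^ (a * b * s⁻¹).val) :
    e (g ^ (u * s).val) (Z ^ (k' * μ').val)
      = e g g ^ (u * (k' * a) * (μ' * b)).val := by
  have heN : ∀ x y : ℕ, e (g ^ x) (g ^ y) = e g g ^ (x * y) := by
    intro x y
    have := he x y
    rw [zpow_natCast, zpow_natCast] at this
    rw [this, ← zpow_natCast (e g g) (x * y)]
    push_cast
    ring_nf
  have hE : e g g ^ p = 1 := by
    have h1 := heN p 1
    have h2 := heN 0 1
    simp only [hg, pow_zero, pow_one, mul_one, zero_mul, pow_zero] at h1 h2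
    rw [← h1, h2]
  have key : ∀ M N : ℕ, M % p = N % p → e g g ^ M = e g g ^ N := by
    intro M N h
    rw [← Nat.div_add_mod M p, ← Nat.div_add_mod N p, pow_add, pow_add,
      pow_mul, pow_mul, hE, one_pow, one_pow, h]
  subst hZ
  rw [← pow_mul, heN]
  apply key
  have hcast : (((u * s).val * ((a * b * s⁻¹).val * (k' * μ').val) : ℕ) : ZMod p)
      = (((u * (k' * a) * (μ' * b)).val : ℕ) : ZMod p) := by
    push_cast [ZMod.natCast_val, ZMod.cast_id]
    field_simp
  have := (ZMod.natCast_eq_natCast_iff _ _ _).mp hcast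
  exact this
end
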